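/- Let k be a field and A a finite-dimensional k-algebra with dominant dimension at least 2, and let V be a faithful projective-injective finitely generated right A-module. Set P = Hom_A(V, A), the left A-module of right A-linear maps from V to A (which is a finitely generated projective left A-module). Then (A, P) is a cover of End_A(P)^op, and End_A(P)^op ≅ End_A(V) as k-algebras (endomorphisms of V as a right A-module), so (A, Hom_A(V, A)) is a cover of End_A(V). -/

import Mathlib

/-!
Let `P = Hom_A(V, A)`. As `V` is finitely generated projective, evaluation identifies `V` with
`Hom_A(P, A)` (dual basis lemma). This gives `End_A(P)ᵒᵖ ≅ End_A(V)`, and turns an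
`End_A(P)`-linear endomorphism of `Hom_A(P, A)` into an additive endomorphism of `V` commuting
with `End_A(V)`. Since `A` is finite dimensional, faithfulness embeds `A` into some `Vⁿ`; pushing
`1` through the injective modules of `0 → A → I₀ → I₁` shows that such an endomorphism is right
multiplication by an element of `A` (double centralizer property). This is fullness of
`Hom_A(P, -)` on `Hom_A(A, A)`, and fullness on finitely generated projectives follows by
additivity. Injectivity of `g ↦ g ∘ -` holds because the trace ideal of `P` in `A` has zero right
annihilator, again by faithfulness of `V`.
-/

universe u

open MulOpposite

set_option synthInstance.maxHeartbeats 400000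
set_option maxHeartbeats 1000000

/-- `(A, P)` is a cover of `B = End_A(P)ᵒᵖ`: the Schur functor `Hom_A(P, -)` is fully
faithful on finitely generated projective `A`-modules.  Here a map
`Φ : Hom_A(P, M) → Hom_A(P, N)` is `B`-linear iff it is additive and commutes with
precomposition by every `A`-endomorphism of `P`, so the condition says that for all
finitely generated projective `M`, `N` the natural map
`Hom_A(M, N) → Hom_B(Hom_A(P, M), Hom_A(P, N))`, `g ↦ (f ↦ g ∘ f)`, is bijective. -/
def IsCover (A : Type u) [Ring A] (P : Type u) [AddCommGroup P] [Module A P] : Prop :=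
  ∀ (M N : Type u) [AddCommGroup M] [Module A M] [AddCommGroup N] [Module A N],
    Module.Finite A M → Module.Projective A M →
    Module.Finite A N → Module.Projective A N →
    (Function.Injective fun (g : M →ₗ[A] N) => fun f : P →ₗ[A] M => g ∘ₗ f) ∧
    (∀ Φ : (P →ₗ[A] M) → (P →ₗ[A] N),
      (∀ f₁ f₂, Φ (f₁ + f₂) = Φ f₁ + Φ f₂) →
      (∀ (f : P →ₗ[A] M) (g : P →ₗ[A] P), Φ (f ∘ₗ g) = Φ f ∘ₗ g) →
      ∃ g : M →ₗ[A] N, ∀ f, Φ f = g ∘ₗ f)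

/-- `domdim A ≥ 2`, formulated with right `A`-modules (i.e. left `Aᵐᵒᵖ`-modules):
there is an exact sequence `0 → A → I₀ → I₁` of right `A`-modules with `I₀` and `I₁`
both projective and injective. -/
def DomdimGeTwoRight (A : Type u) [Ring A] : Prop :=
  ∃ (I₀ : Type u) (_ : AddCommGroup I₀) (_ : Module Aᵐᵒᵖ I₀)
    (I₁ : Type u) (_ : AddCommGroup I₁) (_ : Module Aᵐᵒᵖ I₁),
    Module.Projective Aᵐᵒᵖ I₀ ∧ Module.Injective Aᵐᵒᵖ I₀ ∧
    Module.Projective Aᵐᵒᵖ I₁ ∧ Module.Injective Aᵐᵒᵖ I₁ ∧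
    ∃ (f : A →ₗ[Aᵐᵒᵖ] I₀) (g : I₀ →ₗ[Aᵐᵒᵖ] I₁),
      Function.Injective f ∧ LinearMap.range f = LinearMap.ker g

section DoubleCentralizer

variable {R V : Type u} [Ring R] [AddCommGroup V] [Module R V]

theorem exists_finset_forall_smul_eq_zero [IsArtinianRing R]
    (hV : ∀ r : R, (∀ v : V, r • v = 0) → r = 0) :
    ∃ s : Finset V, ∀ r : R, (∀ v ∈ s, r • v = 0) → r = 0 := by
  classical
  obtain ⟨_, ⟨s, rfl⟩, hmin⟩ := IsArtinian.set_has_minimal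
    (Set.range fun s : Finset V => s.inf (Ideal.torsionOf R V)) ⟨⊤, ∅, rfl⟩
  refine ⟨s, fun r hr => by_contra fun hr0 => ?_⟩
  obtain ⟨v, hv⟩ : ∃ v, r • v ≠ 0 := not_forall.mp fun h => hr0 (hV r h)
  refine hmin _ ⟨insert v s, rfl⟩ <| (Finset.inf_mono (s.subset_insert v)).lt_of_ne fun h => hv ?_
  have hr : r ∈ (insert v s).inf (Ideal.torsionOf R V) := h ▸ Submodule.mem_finsetInf.mpr hr
  exact LinearMap.mem_ker.mp (Submodule.mem_finsetInf.mp hr v (s.mem_insert_self v))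

theorem eq_zero_of_forall_linearMap_apply_eq_zero {X : Type*} [AddCommGroup X] [Module R X]
    [Module.Projective R X] (hV : ∀ r : R, (∀ v : V, r • v = 0) → r = 0) {x : X}
    (hx : ∀ f : X →ₗ[R] V, f x = 0) : x = 0 := by
  refine (Module.forall_dual_apply_eq_zero_iff R x).mp fun φ => hV _ fun v => ?_
  exact hx (LinearMap.toSpanSingleton R V v ∘ₗ φ)

theorem map_linearMap_pi_of_commute {ι : Type*} [Fintype ι] [DecidableEq ι] {φ : V →+ V}
    (hφ : ∀ (h : V →ₗ[R] V) (v : V), φ (h v) = h (φ v)) (ψ : (ι → V) →ₗ[R] V) (x : ι → V) :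
    φ (ψ x) = ψ (fun i => φ (x i)) := by
  conv_lhs => rw [← Finset.univ_sum_single x]
  conv_rhs => rw [← Finset.univ_sum_single fun i => φ (x i)]
  simp only [map_sum]
  exact Finset.sum_congr rfl fun i _ => hφ (ψ ∘ₗ LinearMap.single R (fun _ => V) i) (x i)

theorem exists_eq_smul_of_commute [IsArtinianRing R] [Module.Injective R V]
    (hV : ∀ r : R, (∀ v : V, r • v = 0) → r = 0)
    {I₀ I₁ : Type u} [AddCommGroup I₀] [Module R I₀] [AddCommGroup I₁] [Module R I₁]
    [Module.Injective R I₀] [Module.Projective R I₁] (f : R →ₗ[R] I₀) (g : I₀ →ₗ[R] I₁)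
    (hf : Function.Injective f) (hfg : LinearMap.range f = LinearMap.ker g)
    (φ : V →+ V) (hφ : ∀ (h : V →ₗ[R] V) (v : V), φ (h v) = h (φ v)) :
    ∃ r : R, ∀ v, φ v = r • v := by
  classical
  obtain ⟨s, hs⟩ := exists_finset_forall_smul_eq_zero hV
  -- `φ` acts diagonally on `V ^ s ⊇ R`; exactness of `0 → R → I₀ → I₁` forces `φ (u 1) = u b`.
  set u : R →ₗ[R] (s → V) := LinearMap.pi fun v => LinearMap.toSpanSingleton R V v
  have hu : Function.Injective u := fun r r' h => sub_eq_zero.mp <| hs _ fun v hv => by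
    simpa [u, sub_smul, sub_eq_zero] using congrFun h ⟨v, hv⟩
  have hcomm := map_linearMap_pi_of_commute (ι := s) hφ
  set x : s → V := fun i => φ (u 1 i)
  obtain ⟨F, hF⟩ := Module.Injective.out (Q := I₀) u hu f
  obtain ⟨U, hU⟩ := Module.Injective.out (Q := s → V) f hf u
  have hgf : g (f 1) = 0 := LinearMap.mem_ker.mp (hfg ▸ LinearMap.mem_range_self f 1)
  have hgFx : g (F x) = 0 := eq_zero_of_forall_linearMap_apply_eq_zero hV fun t => by
    simpa [hF, hgf] using (hcomm (t ∘ₗ g ∘ₗ F) (u 1)).symm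
  obtain ⟨b, hb⟩ : F x ∈ LinearMap.range f := hfg ▸ hgFx
  have hx : x = u b := funext fun i => calc
    x i = φ (U (F (u 1)) i) := by rw [hF, hU]
    _ = U (F x) i := hcomm (LinearMap.proj i ∘ₗ U ∘ₗ F) (u 1)
    _ = u b i := by rw [← hb, hU]
  refine ⟨b, fun v => ?_⟩
  obtain ⟨t, ht⟩ := Module.Injective.out (Q := V) u hu (LinearMap.toSpanSingleton R V v)
  calc φ v = φ (t (u 1)) := by rw [ht, LinearMap.toSpanSingleton_apply, one_smul]
    _ = t x := hcomm t (u 1)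
    _ = b • v := by rw [hx, ht, LinearMap.toSpanSingleton_apply]

end DoubleCentralizer

section SchurFunctor

variable {A P : Type*} [Ring A] [AddCommGroup P] [Module A P]
  {M N : Type*} [AddCommGroup M] [Module A M] [AddCommGroup N] [Module A N]

variable (A P) in
def IsSchurFull (M N : Type*) [AddCommGroup M] [Module A M] [AddCommGroup N] [Module A N] :
    Prop :=
  ∀ Φ : (P →ₗ[A] M) → (P →ₗ[A] N), (∀ f₁ f₂, Φ (f₁ + f₂) = Φ f₁ + Φ f₂) →
    (∀ (f : P →ₗ[A] M) (g : P →ₗ[A] P), Φ (f ∘ₗ g) = Φ f ∘ₗ g) →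
    ∃ g : M →ₗ[A] N, ∀ f, Φ f = g ∘ₗ f

theorem IsSchurFull.of_retract {M' N' : Type*} [AddCommGroup M'] [Module A M'] [AddCommGroup N']
    [Module A N'] (h : IsSchurFull A P M' N') (πM : M' →ₗ[A] M) (σM : M →ₗ[A] M')
    (hM : πM ∘ₗ σM = LinearMap.id) (πN : N' →ₗ[A] N) (σN : N →ₗ[A] N')
    (hN : πN ∘ₗ σN = LinearMap.id) : IsSchurFull A P M N := by
  intro Φ hadd hcomp
  obtain ⟨g, hg⟩ := h (fun f => σN ∘ₗ Φ (πM ∘ₗ f))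
    (fun f₁ f₂ => by simp only [LinearMap.comp_add, hadd])
    (fun f g => by simp only [← LinearMap.comp_assoc, hcomp])
  refine ⟨πN ∘ₗ g ∘ₗ σM, fun f => ?_⟩
  calc Φ f = πN ∘ₗ σN ∘ₗ Φ (πM ∘ₗ σM ∘ₗ f) := by
        simp only [← LinearMap.comp_assoc, hM, hN, LinearMap.id_comp]
    _ = (πN ∘ₗ g ∘ₗ σM) ∘ₗ f := by rw [hg]; rfl

theorem IsSchurFull.pi_right {ι : Type*} {N : ι → Type*} [∀ i, AddCommGroup (N i)]
    [∀ i, Module A (N i)] (h : ∀ i, IsSchurFull A P M (N i)) :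
    IsSchurFull A P M (∀ i, N i) := by
  intro Φ hadd hcomp
  choose g hg using fun i => h i (fun f => LinearMap.proj i ∘ₗ Φ f)
    (fun f₁ f₂ => by simp only [hadd, LinearMap.comp_add])
    (fun f g => by simp only [hcomp, LinearMap.comp_assoc])
  exact ⟨LinearMap.pi g, fun f =>
    LinearMap.ext fun x => funext fun i => LinearMap.congr_fun (hg i f) x⟩

theorem IsSchurFull.pi_left {ι : Type*} [Fintype ι] [DecidableEq ι] {M : ι → Type*}
    [∀ i, AddCommGroup (M i)] [∀ i, Module A (M i)] (h : ∀ i, IsSchurFull A P (M i) N) :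
    IsSchurFull A P (∀ i, M i) N := by
  intro Φ hadd hcomp
  choose g hg using fun i => h i (fun f => Φ (LinearMap.single A M i ∘ₗ f))
    (fun f₁ f₂ => by simp only [hadd, LinearMap.comp_add])
    (fun f g => by simp only [← hcomp, LinearMap.comp_assoc])
  refine ⟨∑ i, g i ∘ₗ LinearMap.proj i, fun f => ?_⟩
  have hf : f = ∑ i, LinearMap.single A M i ∘ₗ LinearMap.proj i ∘ₗ f := by
    ext x
    simp
  calc Φ f = ∑ i, Φ (LinearMap.single A M i ∘ₗ LinearMap.proj i ∘ₗ f) := by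
        conv_lhs => rw [hf]
        exact map_sum (AddMonoidHom.mk' Φ hadd) _ _
    _ = (∑ i, g i ∘ₗ LinearMap.proj i) ∘ₗ f := by
        simp only [hg]
        ext x
        simp

theorem IsSchurFull.of_finite_projective (h : IsSchurFull A P A A) [Module.Finite A M]
    [Module.Projective A M] [Module.Finite A N] [Module.Projective A N] :
    IsSchurFull A P M N := by
  obtain ⟨m, πM, σM, -, -, hM⟩ := Module.Finite.exists_comp_eq_id_of_projective A M
  obtain ⟨n, πN, σN, -, -, hN⟩ := Module.Finite.exists_comp_eq_id_of_projective A N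
  exact (IsSchurFull.pi_left fun _ => IsSchurFull.pi_right fun _ => h).of_retract πM σM hM πN σN hN

theorem comp_injective_of_projective [Module.Projective A N]
    (hP : ∀ a : A, (∀ (h : P →ₗ[A] A) (x : P), h x * a = 0) → a = 0) :
    Function.Injective fun (g : M →ₗ[A] N) => fun f : P →ₗ[A] M => g ∘ₗ f := by
  intro g₁ g₂ hg
  ext m
  rw [← sub_eq_zero]
  refine (Module.forall_dual_apply_eq_zero_iff A _).mp fun φ => hP _ fun h x => ?_
  have hgm : g₁ (h x • m) = g₂ (h x • m) :=
    LinearMap.congr_fun (congrFun hg (LinearMap.toSpanSingleton A M m ∘ₗ h)) x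
  rw [← smul_eq_mul, ← map_smul, smul_sub, ← map_smul, ← map_smul, hgm, sub_self, map_zero]

end SchurFunctor

section OpDual

variable {A V : Type u} [Ring A] [AddCommGroup V] [Module Aᵐᵒᵖ V]

def opDualEval : V →ₗ[Aᵐᵒᵖ] ((V →ₗ[Aᵐᵒᵖ] A) →ₗ[A] A) where
  toFun v :=
    { toFun p := p v
      map_add' _ _ := rfl
      map_smul' _ _ := rfl }
  map_add' v w := by ext p; simp
  map_smul' c v := by ext p; simp

@[simp]
theorem opDualEval_apply (v : V) (p : V →ₗ[Aᵐᵒᵖ] A) : opDualEval v p = p v := rfl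

theorem exists_opDual_basis [Module.Finite Aᵐᵒᵖ V] [Module.Projective Aᵐᵒᵖ V] :
    ∃ (n : ℕ) (w : Fin n → V) (q : Fin n → V →ₗ[Aᵐᵒᵖ] A), ∀ v, ∑ i, op (q i v) • w i = v := by
  obtain ⟨n, π, σ, -, -, hπσ⟩ := Module.Finite.exists_comp_eq_id_of_projective Aᵐᵒᵖ V
  set w : Fin n → V := fun i => π (Pi.single i 1)
  set q : Fin n → V →ₗ[Aᵐᵒᵖ] A :=
    fun i => (opLinearEquiv Aᵐᵒᵖ).symm.toLinearMap ∘ₗ LinearMap.proj i ∘ₗ σ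
  refine ⟨n, w, q, fun v => ?_⟩
  calc ∑ i, op (q i v) • w i = ∑ i, π (Pi.single i (σ v i)) := by
        simp [q, w, ← map_smul, ← Pi.single_smul']
    _ = v := by
        rw [← map_sum, Finset.univ_sum_single, ← LinearMap.comp_apply, hπσ, LinearMap.id_apply]

theorem apply_eq_sum_of_opDual_basis {n : ℕ} {w : Fin n → V} {q : Fin n → V →ₗ[Aᵐᵒᵖ] A}
    (hwq : ∀ v, ∑ i, op (q i v) • w i = v) (p : V →ₗ[Aᵐᵒᵖ] A) (v : V) :
    p v = ∑ i, p (w i) * q i v := by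
  conv_lhs => rw [← hwq v]
  simp [map_sum]

theorem opDualEval_bijective [Module.Finite Aᵐᵒᵖ V] [Module.Projective Aᵐᵒᵖ V] :
    Function.Bijective (opDualEval (A := A) (V := V)) := by
  obtain ⟨n, w, q, hwq⟩ := exists_opDual_basis (A := A) (V := V)
  refine ⟨(injective_iff_map_eq_zero _).mpr fun v hv => ?_, fun F => ?_⟩
  · rw [← hwq v]
    simp [← opDualEval_apply v, hv]
  · refine ⟨∑ i, op (F (q i)) • w i, LinearMap.ext fun p => ?_⟩
    have hp : ∑ i, p (w i) • q i = p :=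
      LinearMap.ext fun v => by simp [apply_eq_sum_of_opDual_basis hwq p v]
    conv_rhs => rw [← hp]
    simp [map_sum]

noncomputable def opDualEvalEquiv [Module.Finite Aᵐᵒᵖ V] [Module.Projective Aᵐᵒᵖ V] :
    V ≃ₗ[Aᵐᵒᵖ] ((V →ₗ[Aᵐᵒᵖ] A) →ₗ[A] A) :=
  LinearEquiv.ofBijective opDualEval opDualEval_bijective

theorem opDualEvalEquiv_apply [Module.Finite Aᵐᵒᵖ V] [Module.Projective Aᵐᵒᵖ V] (v : V) :
    opDualEvalEquiv (A := A) v = opDualEval v := rfl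

theorem apply_opDualEvalEquiv_symm [Module.Finite Aᵐᵒᵖ V] [Module.Projective Aᵐᵒᵖ V]
    (p : V →ₗ[Aᵐᵒᵖ] A) (F : (V →ₗ[Aᵐᵒᵖ] A) →ₗ[A] A) : p (opDualEvalEquiv.symm F) = F p := by
  rw [← opDualEval_apply, ← opDualEvalEquiv_apply, LinearEquiv.apply_symm_apply]

theorem opDualEvalEquiv_map [Module.Finite Aᵐᵒᵖ V] [Module.Projective Aᵐᵒᵖ V]
    (h : V →ₗ[Aᵐᵒᵖ] V) (v : V) :
    opDualEvalEquiv (h v) = opDualEvalEquiv (A := A) v ∘ₗ LinearMap.lcomp A A h := rfl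

theorem eq_zero_of_forall_opDual_mul_eq_zero [Module.Finite Aᵐᵒᵖ V] [Module.Projective Aᵐᵒᵖ V]
    (hV : ∀ r : Aᵐᵒᵖ, (∀ v : V, r • v = 0) → r = 0) (a : A)
    (ha : ∀ (h : (V →ₗ[Aᵐᵒᵖ] A) →ₗ[A] A) (p : V →ₗ[Aᵐᵒᵖ] A), h p * a = 0) : a = 0 := by
  refine op_injective (hV (op a) fun v => (opDualEval_bijective (A := A)).injective ?_)
  ext p
  simpa using ha (opDualEval v) p

theorem isSchurFull_opDual_self [IsArtinianRing Aᵐᵒᵖ] [Module.Finite Aᵐᵒᵖ V]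
    [Module.Projective Aᵐᵒᵖ V] [Module.Injective Aᵐᵒᵖ V]
    (hV : ∀ r : Aᵐᵒᵖ, (∀ v : V, r • v = 0) → r = 0) (hdom : DomdimGeTwoRight A) :
    IsSchurFull A (V →ₗ[Aᵐᵒᵖ] A) A A := by
  intro Φ hadd hcomp
  obtain ⟨I₀, _, _, I₁, _, _, -, hI₀, hI₁, -, f, g, hf, hfg⟩ := hdom
  set E := opDualEvalEquiv (A := A) (V := V)
  let φ : V →+ V := E.symm.toAddMonoidHom.comp ((AddMonoidHom.mk' Φ hadd).comp E.toAddMonoidHom)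
  have hφ (h : V →ₗ[Aᵐᵒᵖ] V) (v : V) : φ (h v) = h (φ v) := E.injective <| by
    simp [φ, E, opDualEvalEquiv_map, hcomp]
  have e : Aᵐᵒᵖ ≃ₗ[Aᵐᵒᵖ] A := (opLinearEquiv Aᵐᵒᵖ).symm
  obtain ⟨a, ha⟩ := exists_eq_smul_of_commute hV (f ∘ₗ e.toLinearMap) g
    (hf.comp e.injective) (by rw [LinearMap.range_comp_of_range_eq_top _ e.range, hfg]) φ hφ
  refine ⟨a • LinearMap.id, fun F => ?_⟩
  calc Φ F = E (φ (E.symm F)) := by simp [φ]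
    _ = (a • LinearMap.id) ∘ₗ F := by
      rw [ha, map_smul, E.apply_symm_apply, LinearMap.smul_comp, LinearMap.id_comp]

noncomputable def opDualEndRingEquiv [Module.Finite Aᵐᵒᵖ V] [Module.Projective Aᵐᵒᵖ V] :
    (Module.End A (V →ₗ[Aᵐᵒᵖ] A))ᵐᵒᵖ ≃+* Module.End Aᵐᵒᵖ V where
  toFun g := opDualEvalEquiv.symm.toLinearMap ∘ₗ LinearMap.lcomp Aᵐᵒᵖ A g.unop ∘ₗ
    opDualEvalEquiv.toLinearMap
  invFun h := op (LinearMap.lcomp A A h)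
  left_inv g := unop_injective <| by
    ext p v
    simp [LinearMap.lcomp_apply, apply_opDualEvalEquiv_symm, opDualEvalEquiv_apply]
  right_inv h := by
    ext v
    simp [LinearMap.lcomp_apply', ← opDualEvalEquiv_map]
  map_mul' g₁ g₂ := by
    ext v
    simp [LinearMap.lcomp_apply', Module.End.mul_eq_comp, LinearMap.comp_assoc]
  map_add' g₁ g₂ := by
    ext v
    simp [LinearMap.lcomp_apply', LinearMap.comp_add]

theorem opDualEndRingEquiv_op_smul {k : Type*} [CommSemiring k] [Algebra k A] [Module k V]
    [IsScalarTower k Aᵐᵒᵖ V] [Module.Finite Aᵐᵒᵖ V] [Module.Projective Aᵐᵒᵖ V] (c : k)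
    (g : Module.End A (V →ₗ[Aᵐᵒᵖ] A)) :
    opDualEndRingEquiv (op (c • g)) = c • opDualEndRingEquiv (op g) := by
  ext v
  apply (opDualEvalEquiv (A := A)).injective
  ext p
  simp [opDualEndRingEquiv, opDualEvalEquiv_apply, apply_opDualEvalEquiv_symm]

end OpDual

/-- If `A` has dominant dimension at least `2` and `V` is a faithful projective-injective
finitely generated right `A`-module, then `(A, Hom_A(V, A))` is a cover of
`End_A(Hom_A(V, A))ᵒᵖ`, and `End_A(Hom_A(V, A))ᵒᵖ ≅ End_A(V)` as `k`-algebras, so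
`(A, Hom_A(V, A))` is a cover of `End_A(V)`. -/
theorem isCover_of_domdimGeTwo
    (k A V : Type u) [Field k] [Ring A] [Algebra k A] [FiniteDimensional k A]
    [AddCommGroup V] [Module Aᵐᵒᵖ V] [Module k V] [IsScalarTower k Aᵐᵒᵖ V]
    [Module.Finite Aᵐᵒᵖ V]
    (hfaithful : ∀ a : A, (∀ v : V, op a • v = 0) → a = 0)
    (hproj : Module.Projective Aᵐᵒᵖ V) (hinj : Module.Injective Aᵐᵒᵖ V)
    (hdom : DomdimGeTwoRight A) :
    IsCover A (V →ₗ[Aᵐᵒᵖ] A) ∧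
    ∃ e : (Module.End A (V →ₗ[Aᵐᵒᵖ] A))ᵐᵒᵖ ≃+* Module.End Aᵐᵒᵖ V,
      ∀ (c : k) (g : Module.End A (V →ₗ[Aᵐᵒᵖ] A)), e (op (c • g)) = c • e (op g) := by
  have : IsArtinianRing Aᵐᵒᵖ := IsArtinianRing.of_finite k Aᵐᵒᵖ
  have hV (r : Aᵐᵒᵖ) (hr : ∀ v : V, r • v = 0) : r = 0 :=
    unop_injective (hfaithful r.unop (by simpa using hr))
  refine ⟨fun M N _ _ _ _ _ _ _ _ => ⟨?_, ?_⟩, opDualEndRingEquiv, opDualEndRingEquiv_op_smul⟩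
  · exact comp_injective_of_projective (eq_zero_of_forall_opDual_mul_eq_zero (A := A) hV)
  · exact (isSchurFull_opDual_self hV hdom).of_finite_projective
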